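/- arXiv:2208.07095 — 6 statements merged into one kernel-verified Lean document; each statement's English description precedes it below -/
import Mathlib

section
/- Let H be a real symmetric d×d matrix and g ∈ ℝ^d a nonzero vector. Then the grade of g with respect to H equals the number of g-relevant eigenvalues of H; that is, the dimension of the full Krylov space span{H^i g : i ≥ 0} equals the number of eigenvalues λ of H whose eigenspace ker(H − λI) is not orthogonal to g. -/
/-!
Expand `g = ∑ μ, g_μ` along the eigenspaces of `H`, keeping only the nonzero components. Then
`H ^ k g = ∑ μ ^ k • g_μ`, and Lagrange interpolation writes each `g_μ` as a polynomial in `H`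
applied to `g`; so the Krylov space is spanned by the `g_μ`, which are linearly independent as
eigenvectors for distinct eigenvalues. Since eigenvectors of a symmetric matrix for distinct
eigenvalues are orthogonal, an eigenvector `v` for `λ` has `v ⬝ g = v ⬝ g_λ`, so `λ` is
`g`-relevant exactly when `g_λ ≠ 0`.
-/

open Matrix

/-- The Krylov subspace of degree `t`: span of `g, Hg, …, H^{t-1} g`. -/
noncomputable def Krylov {d : ℕ} (H : Matrix (Fin d) (Fin d) ℝ) (g : Fin d → ℝ) (t : ℕ) :
    Submodule ℝ (Fin d → ℝ) :=
  Submodule.span ℝ ((fun i : ℕ => (H ^ i) *ᵥ g) '' Set.Iio t)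

/-- The full Krylov space: span of `{H^i g : i ≥ 0}`. -/
noncomputable def KrylovFull {d : ℕ} (H : Matrix (Fin d) (Fin d) ℝ) (g : Fin d → ℝ) :
    Submodule ℝ (Fin d → ℝ) :=
  Submodule.span ℝ (Set.range fun i : ℕ => (H ^ i) *ᵥ g)

/-- `lam` is a `g`-relevant eigenvalue of `H`: `g` is not orthogonal to `ker (H - lam I)`. -/
def gRelevant {d : ℕ} (H : Matrix (Fin d) (Fin d) ℝ) (g : Fin d → ℝ) (lam : ℝ) : Prop :=
  ∃ v : Fin d → ℝ, H *ᵥ v = lam • v ∧ v ⬝ᵥ g ≠ 0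

/-- The Euclidean norm of a vector. -/
noncomputable def vnorm {d : ℕ} (x : Fin d → ℝ) : ℝ := Real.sqrt (x ⬝ᵥ x)

open Module Module.End Polynomial

theorem Polynomial.aeval_apply_mem_span_range_pow_apply {R M : Type*} [CommSemiring R]
    [AddCommMonoid M] [Module R M] (f : End R M) (p : R[X]) (x : M) :
    aeval f p x ∈ Submodule.span R (Set.range fun k : ℕ => (f ^ k) x) := by
  rw [aeval_eq_sum_range, LinearMap.sum_apply]
  exact Submodule.sum_mem _ fun k _ => Submodule.smul_mem _ _ (Submodule.subset_span ⟨k, rfl⟩)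

section Eigenvectors

variable {K V : Type*} [Field K] [AddCommGroup V] [Module K V] {f : End K V}

theorem Module.End.span_range_pow_apply_sum_eigenvectors {s : Finset K} {v : K → V}
    (hv : ∀ μ ∈ s, f.HasEigenvector μ (v μ)) :
    Submodule.span K (Set.range fun k : ℕ => (f ^ k) (∑ μ ∈ s, v μ)) =
      Submodule.span K (v '' s) := by
  classical
  apply le_antisymm
  · rw [Submodule.span_le]
    rintro _ ⟨k, rfl⟩
    simp only [map_sum, Finset.sum_congr rfl fun μ hμ => (hv μ hμ).pow_apply k]
    exact Submodule.sum_mem _ fun μ hμ =>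
      Submodule.smul_mem _ _ (Submodule.subset_span ⟨μ, hμ, rfl⟩)
  · rw [Submodule.span_le]
    rintro _ ⟨μ, hμ, rfl⟩
    have hbasis_self : (Lagrange.basis s id μ).eval μ = 1 :=
      Lagrange.eval_basis_self (Set.injOn_id _) hμ
    have hbasis_ne : ∀ ν ∈ s, ν ≠ μ → (Lagrange.basis s id μ).eval ν = 0 :=
      fun ν hν hne => Lagrange.eval_basis_of_ne (v := id) hne.symm hν
    have hlagrange : aeval f (Lagrange.basis s id μ) (∑ ν ∈ s, v ν) = v μ := by
      rw [map_sum, Finset.sum_eq_single μ]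
      · rw [aeval_apply_of_hasEigenvector (hv μ hμ), hbasis_self, one_smul]
      · intro ν hν hne
        rw [aeval_apply_of_hasEigenvector (hv ν hν), hbasis_ne ν hν hne, zero_smul]
      · exact fun h => absurd hμ h
    rw [SetLike.mem_coe, ← hlagrange]
    exact aeval_apply_mem_span_range_pow_apply f _ _

theorem Module.End.finrank_span_range_pow_apply_sum_eigenvectors {s : Finset K} {v : K → V}
    (hv : ∀ μ ∈ s, f.HasEigenvector μ (v μ)) :
    finrank K (Submodule.span K (Set.range fun k : ℕ => (f ^ k) (∑ μ ∈ s, v μ))) =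
      s.card := by
  have hli : LinearIndependent K fun μ : (s : Set K) => v μ :=
    f.eigenvectors_linearIndependent s _ fun μ => hv μ μ.2
  rw [span_range_pow_apply_sum_eigenvectors hv, Set.image_eq_range, finrank_span_eq_card hli]
  simp

end Eigenvectors

theorem Matrix.IsHermitian.iSup_eigenspace_toLin'_eq_top {𝕜 n : Type*} [RCLike 𝕜] [Fintype n]
    [DecidableEq n] {A : Matrix n n 𝕜} (hA : A.IsHermitian) :
    ⨆ μ : 𝕜, eigenspace (toLin' A) μ = ⊤ := by
  let b := hA.eigenvectorBasis.toBasis.map (WithLp.linearEquiv 2 𝕜 (n → 𝕜))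
  rw [eq_top_iff, ← b.span_eq, Submodule.span_le]
  rintro _ ⟨i, rfl⟩
  refine Submodule.mem_iSup_of_mem (hA.eigenvalues i : 𝕜) ?_
  rw [mem_eigenspace_iff, Basis.map_apply, toLin'_apply, OrthonormalBasis.coe_toBasis,
    WithLp.linearEquiv_apply, ← RCLike.real_smul_eq_coe_smul]
  exact hA.mulVec_eigenvectorBasis i

theorem Matrix.IsSymm.dotProduct_eq_zero_of_mulVec_eq_smul {R n : Type*} [CommRing R]
    [NoZeroDivisors R] [Fintype n] {A : Matrix n n R} (hA : A.IsSymm) {a b : R} {v w : n → R}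
    (hv : A *ᵥ v = a • v) (hw : A *ᵥ w = b • w) (hab : a ≠ b) : v ⬝ᵥ w = 0 := by
  have h : a * (v ⬝ᵥ w) = b * (v ⬝ᵥ w) := by
    calc a * (v ⬝ᵥ w) = (A *ᵥ v) ⬝ᵥ w := by rw [hv, smul_dotProduct, smul_eq_mul]
      _ = v ⬝ᵥ (A *ᵥ w) := by rw [dotProduct_mulVec, ← mulVec_transpose, hA.eq]
      _ = b * (v ⬝ᵥ w) := by rw [hw, dotProduct_smul, smul_eq_mul]
  exact (mul_eq_mul_right_iff.mp h).resolve_left hab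

theorem gRelevant_iff_mem_of_eq_sum_eigenvectors {d : ℕ} {H : Matrix (Fin d) (Fin d) ℝ}
    (hH : H.IsSymm) {g : Fin d → ℝ} {s : Finset ℝ} {w : ℝ → Fin d → ℝ}
    (hw : ∀ μ ∈ s, HasEigenvector (toLin' H) μ (w μ)) (hg : g = ∑ μ ∈ s, w μ)
    (lam : ℝ) :
    gRelevant H g lam ↔ lam ∈ s := by
  have hw_eig : ∀ μ ∈ s, H *ᵥ w μ = μ • w μ := fun μ hμ => by
    simpa only [toLin'_apply] using (hw μ hμ).apply_eq_smul
  have horth : ∀ v, H *ᵥ v = lam • v → ∀ μ ∈ s, μ ≠ lam → v ⬝ᵥ w μ = 0 :=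
    fun v hv μ hμ hne => hH.dotProduct_eq_zero_of_mulVec_eq_smul hv (hw_eig μ hμ) hne.symm
  constructor
  · rintro ⟨v, hv, hvg⟩
    by_contra hlam
    refine hvg ?_
    rw [hg, dotProduct_sum]
    exact Finset.sum_eq_zero fun μ hμ => horth v hv μ hμ fun h => hlam (h ▸ hμ)
  · intro hlam
    refine ⟨w lam, hw_eig lam hlam, ?_⟩
    rw [hg, dotProduct_sum, Finset.sum_eq_single lam
      (fun μ hμ hne => horth _ (hw_eig lam hlam) μ hμ hne) (absurd hlam)]
    exact dotProduct_self_eq_zero.not.mpr (hw lam hlam).2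

theorem grade_eq_ncard_gRelevant_general {d : ℕ} (H : Matrix (Fin d) (Fin d) ℝ)
    (hH : H.IsSymm) (g : Fin d → ℝ) :
    Module.finrank ℝ (KrylovFull H g) = {lam : ℝ | gRelevant H g lam}.ncard := by
  obtain ⟨w, hw_mem, hw_sum⟩ := (Submodule.mem_iSup_iff_exists_finsupp _ g).mp
    ((isHermitian_iff_isSymm.mpr hH).iSup_eigenspace_toLin'_eq_top ▸ Submodule.mem_top)
  have hw : ∀ μ ∈ w.support, HasEigenvector (toLin' H) μ (w μ) :=
    fun μ hμ => ⟨hw_mem μ, Finsupp.mem_support_iff.mp hμ⟩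
  have hg : g = ∑ μ ∈ w.support, w μ := hw_sum.symm
  have hrelevant : {lam | gRelevant H g lam} = w.support :=
    Set.ext (gRelevant_iff_mem_of_eq_sum_eigenvectors hH hw hg)
  have hkrylov : KrylovFull H g =
      Submodule.span ℝ
        (Set.range fun k : ℕ => (toLin' H ^ k) (∑ μ ∈ w.support, w μ)) := by
    simp only [KrylovFull, ← hg, ← toLin'_pow, toLin'_apply]
  rw [hrelevant, Set.ncard_coe_finset, hkrylov, finrank_span_range_pow_apply_sum_eigenvectors hw]

/-- The grade of `g` with respect to `H` (the dimension of the full Krylov space)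
equals the number of `g`-relevant eigenvalues of `H`. -/
theorem grade_eq_ncard_gRelevant {d : ℕ} (H : Matrix (Fin d) (Fin d) ℝ)
    (hH : H.IsSymm) (g : Fin d → ℝ) (hg : g ≠ 0) :
    Module.finrank ℝ (KrylovFull H g) = {lam : ℝ | gRelevant H g lam}.ncard :=
  grade_eq_ncard_gRelevant_general H hH g
end

section
/- Let H be a real symmetric d×d matrix and g ∈ ℝ^d a nonzero vector with grade g* with respect to H. Suppose g does not lie in the range of H, and suppose that ⟨z, Hz⟩ > 0 for every nonzero z ∈ K_{g*−1}(H,g). Then ⟨z, Hz⟩ ≥ 0 for every z ∈ K_{g*}(H,g); moreover, if s minimizes ‖Hs' + g‖ over s' ∈ K_{g*−1}(H,g) and r = −g − Hs is the corresponding residual, then r is a zero-curvature direction, i.e., ⟨r, Hr⟩ = 0 and r ≠ 0. -/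
open Matrix

/-! On the `H`-invariant space `K_{g*}` the map `H` cannot be onto, since `g ∈ K_{g*}` is not in
the range of `H`; so it has a null vector `r ∈ K_{g*}`, which lies outside `K_{g*-1}` because `H`
is injective there. By dimension count `K_{g*} = K_{g*-1} ⊕ ℝ r`, and by symmetry `r` is
`H`-orthogonal to everything, so the curvature of `y + c r` is that of `y`. The MINRES residual
`v = Hs + g` lies in `K_{g*}`, so `Hv ∈ H K_{g*-1}`, to which `v` is orthogonal by minimality. -/

theorem LinearMap.exists_mem_ne_zero_eq_zero_of_mapsTo_of_notMem_range {K V : Type*} [Field K]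
    [AddCommGroup V] [Module K V] (f : V →ₗ[K] V) {p : Submodule K V} [FiniteDimensional K p]
    (hp : ∀ x ∈ p, f x ∈ p) {g : V} (hg : g ∈ p) (hgf : g ∉ range f) :
    ∃ r ∈ p, r ≠ 0 ∧ f r = 0 := by
  have hinj : ¬ Function.Injective (f.restrict hp) := by
    rw [LinearMap.injective_iff_surjective]
    rintro hsurj
    obtain ⟨x, hx⟩ := hsurj ⟨g, hg⟩
    exact hgf ⟨x, congrArg Subtype.val hx⟩
  rw [← LinearMap.ker_eq_bot] at hinj
  obtain ⟨⟨r, hr⟩, hker, hr0⟩ := Submodule.exists_mem_ne_zero_of_ne_bot hinj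
  exact ⟨r, hr, fun h => hr0 (Subtype.ext h), congrArg Subtype.val hker⟩

theorem Submodule.sup_span_singleton_eq_of_finrank_le_succ {K V : Type*} [Field K]
    [AddCommGroup V] [Module K V] [FiniteDimensional K V] {p q : Submodule K V} {v : V}
    (hpq : p ≤ q) (hvq : v ∈ q) (hvp : v ∉ p)
    (hfin : Module.finrank K q ≤ Module.finrank K p + 1) : p ⊔ span K {v} = q :=
  eq_of_le_of_finrank_le (sup_le hpq ((span_singleton_le_iff_mem v q).2 hvq))
    (by rwa [finrank_sup_span_singleton hvp])

theorem Matrix.IsSymm.dotProduct_mulVec_add_smul_of_mulVec_eq_zero {n R : Type*} [Fintype n]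
    [CommRing R] {H : Matrix n n R} (hH : H.IsSymm) {r : n → R} (hr : H *ᵥ r = 0)
    (y : n → R) (c : R) : (y + c • r) ⬝ᵥ (H *ᵥ (y + c • r)) = y ⬝ᵥ (H *ᵥ y) := by
  have hrH : r ⬝ᵥ (H *ᵥ y) = 0 := by
    rw [dotProduct_mulVec, ← mulVec_transpose, hH.eq, hr, zero_dotProduct]
  simp only [mulVec_add, mulVec_smul, hr, smul_zero, add_zero, add_dotProduct,
    smul_dotProduct, hrH]

theorem dotProduct_eq_zero_of_forall_le_dotProduct_self_add_smul {n 𝕜 : Type*} [Fintype n]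
    [Field 𝕜] [LinearOrder 𝕜] [IsStrictOrderedRing 𝕜] {v w : n → 𝕜}
    (h : ∀ t : 𝕜, v ⬝ᵥ v ≤ (v + t • w) ⬝ᵥ (v + t • w)) : v ⬝ᵥ w = 0 := by
  have hquad : ∀ t : 𝕜, 0 ≤ (w ⬝ᵥ w) * (t * t) + 2 * (v ⬝ᵥ w) * t + 0 := by
    intro t
    have ht := h t
    simp only [add_dotProduct, dotProduct_add, smul_dotProduct, dotProduct_smul, smul_eq_mul,
      dotProduct_comm w v] at ht
    linarith
  have hdisc := discrim_le_zero hquad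
  rw [discrim] at hdisc
  nlinarith [sq_nonneg (v ⬝ᵥ w)]

theorem vnorm_le_vnorm_iff {d : ℕ} {x y : Fin d → ℝ} : vnorm x ≤ vnorm y ↔ x ⬝ᵥ x ≤ y ⬝ᵥ y :=
  Real.sqrt_le_sqrt_iff (dotProduct_self_star_nonneg y)

section Krylov

variable {d : ℕ} (H : Matrix (Fin d) (Fin d) ℝ) (g : Fin d → ℝ)

theorem krylov_mono : Monotone (Krylov H g) := fun _ _ hab =>
  Submodule.span_mono (Set.image_mono fun _ hi => lt_of_lt_of_le hi hab)

theorem mem_krylov_of_pos {t : ℕ} (ht : 0 < t) : g ∈ Krylov H g t :=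
  Submodule.subset_span ⟨0, ht, by simp⟩

theorem mulVec_mem_krylov_succ {t : ℕ} {x : Fin d → ℝ} (hx : x ∈ Krylov H g t) :
    H *ᵥ x ∈ Krylov H g (t + 1) := by
  have hmap : (Krylov H g t).map H.mulVecLin ≤ Krylov H g (t + 1) := by
    rw [Krylov, Submodule.map_span, Submodule.span_le]
    rintro _ ⟨_, ⟨i, hi, rfl⟩, rfl⟩
    refine Submodule.subset_span ⟨i + 1, Nat.succ_lt_succ hi, ?_⟩
    simp only [mulVecLin_apply, mulVec_mulVec, pow_succ']
  exact hmap ⟨x, hx, rfl⟩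

theorem mulVec_mem_krylov_of_finrank_succ_le {t : ℕ}
    (h : Module.finrank ℝ (Krylov H g (t + 1)) ≤ Module.finrank ℝ (Krylov H g t))
    {x : Fin d → ℝ} (hx : x ∈ Krylov H g t) : H *ᵥ x ∈ Krylov H g t := by
  rw [Submodule.eq_of_le_of_finrank_le (krylov_mono H g (Nat.le_add_right t 1)) h]
  exact mulVec_mem_krylov_succ H g hx

theorem exists_mulVec_eq_zero_forall_mem_krylov_eq_add_smul {gstar : ℕ} (hgstar : 0 < gstar)
    (hgrade : ∀ t : ℕ, Module.finrank ℝ (Krylov H g t) = min t gstar)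
    (hnr : ¬ ∃ x, H *ᵥ x = g)
    (hinj : ∀ z ∈ Krylov H g (gstar - 1), H *ᵥ z = 0 → z = 0) :
    ∃ r : Fin d → ℝ, H *ᵥ r = 0 ∧
      ∀ z ∈ Krylov H g gstar, ∃ y ∈ Krylov H g (gstar - 1), ∃ c : ℝ, z = y + c • r := by
  have hKinv : ∀ x ∈ Krylov H g gstar, H *ᵥ x ∈ Krylov H g gstar := fun x =>
    mulVec_mem_krylov_of_finrank_succ_le H g (by rw [hgrade, hgrade]; omega)
  obtain ⟨r, hrK, hr0, hHr⟩ : ∃ r ∈ Krylov H g gstar, r ≠ 0 ∧ H *ᵥ r = 0 :=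
    H.mulVecLin.exists_mem_ne_zero_eq_zero_of_mapsTo_of_notMem_range hKinv
      (mem_krylov_of_pos H g hgstar) fun ⟨x, hx⟩ => hnr ⟨x, hx⟩
  have hsup : Krylov H g (gstar - 1) ⊔ Submodule.span ℝ {r} = Krylov H g gstar :=
    Submodule.sup_span_singleton_eq_of_finrank_le_succ (krylov_mono H g (gstar.sub_le 1))
      hrK (fun hr => hr0 (hinj r hr hHr)) (by rw [hgrade, hgrade]; omega)
  refine ⟨r, hHr, fun z hz => ?_⟩
  rw [← hsup] at hz
  obtain ⟨y, hy, _, hw, rfl⟩ := Submodule.mem_sup.1 hz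
  obtain ⟨c, rfl⟩ := Submodule.mem_span_singleton.1 hw
  exact ⟨y, hy, c, rfl⟩

end Krylov

theorem krylov_psd_and_zero_curvature_residual_general {d : ℕ} (H : Matrix (Fin d) (Fin d) ℝ)
    (hH : H.IsSymm) (g : Fin d → ℝ)
    (gstar : ℕ) (hgstar : 0 < gstar)
    (hgrade : ∀ t : ℕ, Module.finrank ℝ (Krylov H g t) = min t gstar)
    (hnr : ¬ ∃ x, H *ᵥ x = g)
    (hpos : ∀ z ∈ Krylov H g (gstar - 1), z ≠ 0 → 0 < z ⬝ᵥ (H *ᵥ z)) :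
    (∀ z ∈ Krylov H g gstar, 0 ≤ z ⬝ᵥ (H *ᵥ z)) ∧
    (∀ s ∈ Krylov H g (gstar - 1),
      (∀ s' ∈ Krylov H g (gstar - 1), vnorm (H *ᵥ s + g) ≤ vnorm (H *ᵥ s' + g)) →
      (-g - H *ᵥ s) ⬝ᵥ (H *ᵥ (-g - H *ᵥ s)) = 0 ∧ -g - H *ᵥ s ≠ 0) := by
  set K₁ := Krylov H g (gstar - 1)
  obtain ⟨r, hHr, hsplit⟩ := exists_mulVec_eq_zero_forall_mem_krylov_eq_add_smul H g hgstar
    hgrade hnr fun z hz hHz => by_contra fun hz0 => by simpa [hHz] using hpos z hz hz0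
  refine ⟨fun z hz => ?_, fun s hs hmin => ?_⟩
  · obtain ⟨y, hy, c, rfl⟩ := hsplit z hz
    rw [hH.dotProduct_mulVec_add_smul_of_mulVec_eq_zero hHr]
    rcases eq_or_ne y 0 with rfl | hy0
    · simp
    · exact (hpos y hy hy0).le
  · set v := H *ᵥ s + g
    have hv_orth : ∀ y ∈ K₁, v ⬝ᵥ (H *ᵥ y) = 0 := fun y hy =>
      dotProduct_eq_zero_of_forall_le_dotProduct_self_add_smul fun t => vnorm_le_vnorm_iff.1 <| by
        simpa [v, mulVec_add, mulVec_smul, add_right_comm] using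
          hmin (s + t • y) (K₁.add_mem hs (K₁.smul_mem t hy))
    have hvK : v ∈ Krylov H g gstar := Submodule.add_mem _
      (by simpa [Nat.sub_add_cancel hgstar] using mulVec_mem_krylov_succ H g hs)
      (mem_krylov_of_pos H g hgstar)
    obtain ⟨y, hy, c, hvy⟩ := hsplit v hvK
    have hHv : H *ᵥ v = H *ᵥ y := by rw [hvy, mulVec_add, mulVec_smul, hHr, smul_zero, add_zero]
    have hres : -g - H *ᵥ s = -v := by simp only [v]; abel
    rw [hres, mulVec_neg, neg_dotProduct_neg, hHv, neg_ne_zero]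
    refine ⟨hv_orth y hy, fun hv0 => hnr ⟨-s, ?_⟩⟩
    rw [mulVec_neg]
    exact neg_eq_of_add_eq_zero_right hv0

/-- If `g ∉ range H` and the curvature is strictly positive on `K_{g*-1}(H,g)`, then it is
nonnegative on `K_{g*}(H,g)`, and the residual of the MINRES solution over `K_{g*-1}(H,g)`
is a nonzero zero-curvature direction. -/
theorem krylov_psd_and_zero_curvature_residual {d : ℕ} (H : Matrix (Fin d) (Fin d) ℝ)
    (hH : H.IsSymm) (g : Fin d → ℝ) (hg : g ≠ 0)
    (gstar : ℕ) (hgstar : 0 < gstar)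
    (hgrade : ∀ t : ℕ, Module.finrank ℝ (Krylov H g t) = min t gstar)
    (hnr : ¬ ∃ x, H *ᵥ x = g)
    (hpos : ∀ z ∈ Krylov H g (gstar - 1), z ≠ 0 → 0 < z ⬝ᵥ (H *ᵥ z)) :
    (∀ z ∈ Krylov H g gstar, 0 ≤ z ⬝ᵥ (H *ᵥ z)) ∧
    (∀ s ∈ Krylov H g (gstar - 1),
      (∀ s' ∈ Krylov H g (gstar - 1), vnorm (H *ᵥ s + g) ≤ vnorm (H *ᵥ s' + g)) →
      (-g - H *ᵥ s) ⬝ᵥ (H *ᵥ (-g - H *ᵥ s)) = 0 ∧ -g - H *ᵥ s ≠ 0) :=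
  krylov_psd_and_zero_curvature_residual_general H hH g gstar hgstar hgrade hnr hpos
end

section
/- Let H be a real symmetric d×d matrix and g ∈ ℝ^d a nonzero vector with grade g* with respect to H. Then: (a) there exists a nonzero z ∈ K_{g*}(H,g) with ⟨z, Hz⟩ ≤ 0 if and only if H has at least one nonpositive g-relevant eigenvalue; and (b) there exists a nonzero z ∈ K_{g*}(H,g) with ⟨z, Hz⟩ < 0 if and only if H has at least one negative g-relevant eigenvalue. -/
open Matrix

/-! In an orthonormal eigenbasis `(uᵢ)` of `H`, the vector `p(H) g` has coordinates
`p(λᵢ) ⟨uᵢ, g⟩`, and once the grade is reached every such vector lies in `K_{g*}(H, g)`.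
Hence the coordinates of a Krylov vector `z` are supported on the `g`-relevant eigenvectors,
so `⟨z, Hz⟩ = ∑ λᵢ ⟨uᵢ, z⟩²` is at least `λ ‖z‖²` for some `g`-relevant `λ`. Conversely, for a
`g`-relevant `λ`, taking for `p` the Lagrange basis polynomial of `λ` on the spectrum makes
`p(H) g` the orthogonal projection of `g` onto the `λ`-eigenspace: a nonzero eigenvector for `λ`
inside the Krylov space. -/

open Polynomial

theorem exists_ne_zero_mul_sum_sq_le_sum_mul_sq {ι : Type*} [Fintype ι] (c w : ι → ℝ)
    (hw : w ≠ 0) : ∃ i, w i ≠ 0 ∧ c i * ∑ j, w j ^ 2 ≤ ∑ j, c j * w j ^ 2 := by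
  have hsupp : (Finset.univ.filter fun i => w i ≠ 0).Nonempty := by
    obtain ⟨i, hi⟩ := Function.ne_iff.mp hw
    exact ⟨i, Finset.mem_filter.mpr ⟨Finset.mem_univ i, hi⟩⟩
  obtain ⟨i, hi, hmin⟩ := Finset.exists_min_image _ c hsupp
  refine ⟨i, (Finset.mem_filter.mp hi).2, ?_⟩
  rw [Finset.mul_sum]
  refine Finset.sum_le_sum fun j _ => ?_
  by_cases hj : w j = 0
  · simp [hj]
  · exact mul_le_mul_of_nonneg_right (hmin j (Finset.mem_filter.mpr ⟨Finset.mem_univ j, hj⟩))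
      (sq_nonneg _)

namespace Matrix.IsHermitian

variable {n : Type*} [Fintype n] [DecidableEq n] {A : Matrix n n ℝ} (hA : A.IsHermitian)
include hA

theorem dotProduct_eq_sum_eigenvectorBasis (y z : n → ℝ) :
    y ⬝ᵥ z = ∑ i, (⇑(hA.eigenvectorBasis i) ⬝ᵥ y) * (⇑(hA.eigenvectorBasis i) ⬝ᵥ z) := by
  have := hA.eigenvectorBasis.sum_inner_mul_inner (WithLp.toLp 2 y) (WithLp.toLp 2 z)
  simp only [EuclideanSpace.inner_eq_star_dotProduct, star_trivial] at this
  rw [dotProduct_comm, ← this]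
  simp only [dotProduct_comm z]

theorem eq_zero_of_forall_eigenvectorBasis_dotProduct_eq_zero {z : n → ℝ}
    (h : ∀ i, ⇑(hA.eigenvectorBasis i) ⬝ᵥ z = 0) : z = 0 :=
  dotProduct_self_eq_zero.mp (by simp [hA.dotProduct_eq_sum_eigenvectorBasis z, h])

theorem eigenvectorBasis_dotProduct_mulVec (i : n) (z : n → ℝ) :
    ⇑(hA.eigenvectorBasis i) ⬝ᵥ (A *ᵥ z) = hA.eigenvalues i * (⇑(hA.eigenvectorBasis i) ⬝ᵥ z) := by
  have hsymm : ∀ v, v ᵥ* A = A *ᵥ v := fun v => by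
    rw [← vecMul_transpose, (isHermitian_iff_isSymm.mp hA).eq]
  rw [dotProduct_mulVec, hsymm, mulVec_eigenvectorBasis, smul_dotProduct, smul_eq_mul]

theorem eigenvectorBasis_dotProduct_pow_mulVec (k : ℕ) (i : n) (z : n → ℝ) :
    ⇑(hA.eigenvectorBasis i) ⬝ᵥ (A ^ k *ᵥ z) =
      hA.eigenvalues i ^ k * (⇑(hA.eigenvectorBasis i) ⬝ᵥ z) := by
  induction k with
  | zero => rw [pow_zero, pow_zero, one_mulVec, one_mul]
  | succ k ih =>
    rw [pow_succ', ← mulVec_mulVec, eigenvectorBasis_dotProduct_mulVec, ih, pow_succ', mul_assoc]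

theorem eigenvectorBasis_dotProduct_aeval_mulVec (p : ℝ[X]) (i : n) (z : n → ℝ) :
    ⇑(hA.eigenvectorBasis i) ⬝ᵥ (aeval A p *ᵥ z) =
      p.eval (hA.eigenvalues i) * (⇑(hA.eigenvectorBasis i) ⬝ᵥ z) := by
  induction p using Polynomial.induction_on' with
  | add p q hp hq => rw [map_add, add_mulVec, dotProduct_add, hp, hq, eval_add, add_mul]
  | monomial k c =>
    rw [aeval_monomial, ← Algebra.smul_def, smul_mulVec, dotProduct_smul, smul_eq_mul,
      eigenvectorBasis_dotProduct_pow_mulVec, eval_monomial, mul_assoc]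

theorem dotProduct_mulVec_self_eq_sum (z : n → ℝ) :
    z ⬝ᵥ (A *ᵥ z) = ∑ i, hA.eigenvalues i * (⇑(hA.eigenvectorBasis i) ⬝ᵥ z) ^ 2 := by
  simp only [hA.dotProduct_eq_sum_eigenvectorBasis z, eigenvectorBasis_dotProduct_mulVec]
  exact Finset.sum_congr rfl fun i _ => by ring

theorem exists_aeval_mulVec_eq_smul (g : n → ℝ) {i : n}
    (hi : ⇑(hA.eigenvectorBasis i) ⬝ᵥ g ≠ 0) :
    ∃ p : ℝ[X], aeval A p *ᵥ g ≠ 0 ∧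
      A *ᵥ (aeval A p *ᵥ g) = hA.eigenvalues i • (aeval A p *ᵥ g) := by
  -- `p(A) g` is the orthogonal projection of `g` onto the `λᵢ`-eigenspace.
  set p := Lagrange.basis (Finset.univ.image hA.eigenvalues) id (hA.eigenvalues i)
  have hinj : Set.InjOn id (Finset.univ.image hA.eigenvalues : Set ℝ) := Set.injOn_id _
  have hmem : ∀ j, hA.eigenvalues j ∈ Finset.univ.image hA.eigenvalues := fun j =>
    Finset.mem_image_of_mem _ (Finset.mem_univ j)
  have hp_self : p.eval (hA.eigenvalues i) = 1 :=
    Lagrange.eval_basis_self (v := id) hinj (hmem i)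
  have hp_ne : ∀ j, hA.eigenvalues j ≠ hA.eigenvalues i → p.eval (hA.eigenvalues j) = 0 :=
    fun j hj => Lagrange.eval_basis_of_ne (v := id) hj.symm (hmem j)
  refine ⟨p, fun h0 => hi ?_,
    sub_eq_zero.mp (hA.eq_zero_of_forall_eigenvectorBasis_dotProduct_eq_zero fun j => ?_)⟩
  · simpa [h0, hp_self] using (hA.eigenvectorBasis_dotProduct_aeval_mulVec p i g).symm
  · rw [dotProduct_sub, dotProduct_smul, eigenvectorBasis_dotProduct_mulVec,
      eigenvectorBasis_dotProduct_aeval_mulVec, smul_eq_mul, ← sub_mul]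
    by_cases hj : hA.eigenvalues j = hA.eigenvalues i
    · rw [hj, sub_self, zero_mul]
    · rw [hp_ne j hj, zero_mul, mul_zero]

end Matrix.IsHermitian

section KrylovSubspace

variable {d : ℕ} (H : Matrix (Fin d) (Fin d) ℝ) (g : Fin d → ℝ)

theorem krylov_mono_s3 {s t : ℕ} (h : s ≤ t) : Krylov H g s ≤ Krylov H g t :=
  Submodule.span_mono (Set.image_mono fun _ hx => lt_of_lt_of_le hx h)

variable {H g}

theorem krylov_eq_of_grade_le {gstar : ℕ}
    (hgrade : ∀ t : ℕ, Module.finrank ℝ (Krylov H g t) = min t gstar) {t : ℕ} (ht : gstar ≤ t) :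
    Krylov H g t = Krylov H g gstar := by
  induction t, ht using Nat.le_induction with
  | base => rfl
  | succ t ht ih =>
    rw [← ih]
    refine (Submodule.eq_of_le_of_finrank_le (krylov_mono_s3 H g (Nat.le_succ t)) ?_).symm
    rw [hgrade, hgrade, min_eq_right ht, min_eq_right (ht.trans (Nat.le_succ t))]

theorem krylovFull_eq_krylov_of_grade {gstar : ℕ}
    (hgrade : ∀ t : ℕ, Module.finrank ℝ (Krylov H g t) = min t gstar) :
    KrylovFull H g = Krylov H g gstar := by
  refine le_antisymm ?_ (Submodule.span_mono fun _ ⟨i, _, hi⟩ => ⟨i, hi⟩)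
  rw [KrylovFull, Submodule.span_le]
  rintro _ ⟨i, rfl⟩
  rw [SetLike.mem_coe, ← krylov_eq_of_grade_le hgrade (le_max_right (i + 1) gstar)]
  exact Submodule.subset_span ⟨i, lt_of_lt_of_le (Nat.lt_succ_self i) (le_max_left _ _), rfl⟩

theorem aeval_mulVec_mem_krylovFull (p : ℝ[X]) : aeval H p *ᵥ g ∈ KrylovFull H g := by
  induction p using Polynomial.induction_on' with
  | add p q hp hq => rw [map_add, add_mulVec]; exact add_mem hp hq
  | monomial k c =>
    rw [aeval_monomial, ← Algebra.smul_def, smul_mulVec]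
    exact Submodule.smul_mem _ _ (Submodule.subset_span ⟨k, rfl⟩)

theorem exists_aeval_mulVec_eq_of_mem_krylov {t : ℕ} {z : Fin d → ℝ} (hz : z ∈ Krylov H g t) :
    ∃ p : ℝ[X], aeval H p *ᵥ g = z := by
  induction hz using Submodule.span_induction with
  | mem x hx => obtain ⟨i, -, rfl⟩ := hx; exact ⟨X ^ i, by simp⟩
  | zero => exact ⟨0, by simp⟩
  | add x y _ _ hx hy =>
    obtain ⟨p, rfl⟩ := hx
    obtain ⟨q, rfl⟩ := hy
    exact ⟨p + q, by rw [map_add, add_mulVec]⟩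
  | smul c x _ hx =>
    obtain ⟨p, rfl⟩ := hx
    exact ⟨c • p, by rw [map_smul, smul_mulVec]⟩

end KrylovSubspace

section Relevance

variable {d : ℕ} {H : Matrix (Fin d) (Fin d) ℝ} {g : Fin d → ℝ} (hH : H.IsHermitian)
include hH

theorem gRelevant_eigenvalues {i : Fin d} (hi : ⇑(hH.eigenvectorBasis i) ⬝ᵥ g ≠ 0) :
    gRelevant H g (hH.eigenvalues i) :=
  ⟨_, hH.mulVec_eigenvectorBasis i, hi⟩

theorem gRelevant.exists_eigenvalues_eq {μ : ℝ} (h : gRelevant H g μ) :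
    ∃ i, hH.eigenvalues i = μ ∧ ⇑(hH.eigenvectorBasis i) ⬝ᵥ g ≠ 0 := by
  obtain ⟨v, hv, hvg⟩ := h
  rw [hH.dotProduct_eq_sum_eigenvectorBasis] at hvg
  obtain ⟨i, -, hi⟩ := Finset.exists_ne_zero_of_sum_ne_zero hvg
  refine ⟨i, mul_right_cancel₀ (left_ne_zero_of_mul hi) ?_, right_ne_zero_of_mul hi⟩
  rw [← hH.eigenvectorBasis_dotProduct_mulVec, hv, dotProduct_smul, smul_eq_mul]

theorem gRelevant.exists_eigenvector_mem_krylovFull {μ : ℝ} (h : gRelevant H g μ) :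
    ∃ z ∈ KrylovFull H g, z ≠ 0 ∧ H *ᵥ z = μ • z := by
  obtain ⟨i, rfl, hi⟩ := h.exists_eigenvalues_eq hH
  obtain ⟨p, hp0, hp⟩ := hH.exists_aeval_mulVec_eq_smul g hi
  exact ⟨_, aeval_mulVec_mem_krylovFull p, hp0, hp⟩

theorem exists_gRelevant_mul_dotProduct_le_of_mem_krylov {t : ℕ} {z : Fin d → ℝ}
    (hz : z ∈ Krylov H g t) (hz0 : z ≠ 0) :
    ∃ μ, gRelevant H g μ ∧ μ * (z ⬝ᵥ z) ≤ z ⬝ᵥ (H *ᵥ z) := by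
  have hw : (fun j => ⇑(hH.eigenvectorBasis j) ⬝ᵥ z) ≠ 0 := fun h =>
    hz0 (hH.eq_zero_of_forall_eigenvectorBasis_dotProduct_eq_zero (congrFun h))
  obtain ⟨i, hi, hle⟩ := exists_ne_zero_mul_sum_sq_le_sum_mul_sq hH.eigenvalues _ hw
  refine ⟨hH.eigenvalues i, gRelevant_eigenvalues hH ?_, ?_⟩
  · obtain ⟨p, rfl⟩ := exists_aeval_mulVec_eq_of_mem_krylov hz
    rw [hH.eigenvectorBasis_dotProduct_aeval_mulVec] at hi
    exact right_ne_zero_of_mul hi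
  · rw [hH.dotProduct_mulVec_self_eq_sum, hH.dotProduct_eq_sum_eigenvectorBasis]
    simpa only [sq] using hle

end Relevance

theorem npc_direction_iff_gRelevant_nonpos_general {d : ℕ} (H : Matrix (Fin d) (Fin d) ℝ)
    (hH : H.IsSymm) (g : Fin d → ℝ) (gstar : ℕ)
    (hgrade : ∀ t : ℕ, Module.finrank ℝ (Krylov H g t) = min t gstar) :
    ((∃ z ∈ Krylov H g gstar, z ≠ 0 ∧ z ⬝ᵥ (H *ᵥ z) ≤ 0) ↔
      ∃ lam : ℝ, lam ≤ 0 ∧ gRelevant H g lam) ∧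
    ((∃ z ∈ Krylov H g gstar, z ≠ 0 ∧ z ⬝ᵥ (H *ᵥ z) < 0) ↔
      ∃ lam : ℝ, lam < 0 ∧ gRelevant H g lam) := by
  have hA : H.IsHermitian := isHermitian_iff_isSymm.mpr hH
  have hK := krylovFull_eq_krylov_of_grade hgrade
  have hpos : ∀ z : Fin d → ℝ, z ≠ 0 → 0 < z ⬝ᵥ z := fun z hz => by
    simpa using dotProduct_self_star_pos_iff.mpr hz
  have hrayleigh : ∀ {μ : ℝ} {z : Fin d → ℝ}, H *ᵥ z = μ • z → z ⬝ᵥ (H *ᵥ z) = μ * (z ⬝ᵥ z) :=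
    fun h => by rw [h, dotProduct_smul, smul_eq_mul]
  refine ⟨⟨?_, ?_⟩, ⟨?_, ?_⟩⟩
  · rintro ⟨z, hz, hz0, hnpc⟩
    obtain ⟨μ, hμ, hle⟩ := exists_gRelevant_mul_dotProduct_le_of_mem_krylov hA hz hz0
    exact ⟨μ, nonpos_of_mul_nonpos_left (hle.trans hnpc) (hpos z hz0), hμ⟩
  · rintro ⟨μ, hμ0, hμ⟩
    obtain ⟨z, hz, hz0, hHz⟩ := hμ.exists_eigenvector_mem_krylovFull hA
    refine ⟨z, hK ▸ hz, hz0, ?_⟩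
    rw [hrayleigh hHz]
    exact mul_nonpos_of_nonpos_of_nonneg hμ0 (hpos z hz0).le
  · rintro ⟨z, hz, hz0, hnc⟩
    obtain ⟨μ, hμ, hle⟩ := exists_gRelevant_mul_dotProduct_le_of_mem_krylov hA hz hz0
    exact ⟨μ, neg_of_mul_neg_left (hle.trans_lt hnc) (hpos z hz0).le, hμ⟩
  · rintro ⟨μ, hμ0, hμ⟩
    obtain ⟨z, hz, hz0, hHz⟩ := hμ.exists_eigenvector_mem_krylovFull hA
    refine ⟨z, hK ▸ hz, hz0, ?_⟩
    rw [hrayleigh hHz]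
    exact mul_neg_of_neg_of_pos hμ0 (hpos z hz0)

/-- `K_{g*}(H,g)` contains a nonpositive-curvature direction iff `H` has a nonpositive
`g`-relevant eigenvalue, and a negative-curvature direction iff `H` has a negative
`g`-relevant eigenvalue. -/
theorem npc_direction_iff_gRelevant_nonpos {d : ℕ} (H : Matrix (Fin d) (Fin d) ℝ)
    (hH : H.IsSymm) (g : Fin d → ℝ) (hg : g ≠ 0)
    (gstar : ℕ) (hgstar : 0 < gstar)
    (hgrade : ∀ t : ℕ, Module.finrank ℝ (Krylov H g t) = min t gstar) :
    ((∃ z ∈ Krylov H g gstar, z ≠ 0 ∧ z ⬝ᵥ (H *ᵥ z) ≤ 0) ↔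
      ∃ lam : ℝ, lam ≤ 0 ∧ gRelevant H g lam) ∧
    ((∃ z ∈ Krylov H g gstar, z ≠ 0 ∧ z ⬝ᵥ (H *ᵥ z) < 0) ↔
      ∃ lam : ℝ, lam < 0 ∧ gRelevant H g lam) :=
  npc_direction_iff_gRelevant_nonpos_general H hH g gstar hgrade
end

section
/- Let H be a real symmetric d×d matrix and g ∈ ℝ^d a nonzero vector such that every eigenvalue of H is g-relevant. Then H is positive definite if and only if ⟨z, Hz⟩ > 0 for every nonzero z in the full Krylov space K(H,g) = span{H^i g : i ≥ 0}. -/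
open Matrix

/-!
If `H` is positive on the `H`-invariant space `K(H, g)`, then so is every eigenvalue of `H`
restricted to `K(H, g)`. It remains to see that every `g`-relevant eigenvalue `λ` of `H` is an
eigenvalue of `H` on `K(H, g)`. Otherwise `H - λ` is injective, hence surjective, on the
finite-dimensional space `K(H, g) ∋ g`, so `g = (H - λ) u` with `u ∈ K(H, g)`, and for every
eigenvector `w` for `λ`, symmetry gives `w ⬝ g = ((H - λ) w) ⬝ u = 0`.
-/

namespace Matrix

variable {F n : Type*} [Field F] [Fintype n]

theorem IsSymm.dotProduct_mulVec_comm {H : Matrix n n F} (hH : H.IsSymm) (v w : n → F) :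
    v ⬝ᵥ (H *ᵥ w) = (H *ᵥ v) ⬝ᵥ w := by
  rw [dotProduct_mulVec, ← mulVec_transpose, hH.eq]

theorem IsSymm.exists_eigenvector_mem_of_dotProduct_ne_zero {H : Matrix n n F} (hH : H.IsSymm)
    {p : Submodule F (n → F)} (hp : ∀ x ∈ p, H *ᵥ x ∈ p) {g w : n → F} {c : F} (hg : g ∈ p)
    (hw : H *ᵥ w = c • w) (hwg : w ⬝ᵥ g ≠ 0) : ∃ z ∈ p, z ≠ 0 ∧ H *ᵥ z = c • z := by
  by_contra! hno
  set f : p →ₗ[F] p := (mulVecLin H - c • LinearMap.id).restrict fun x hx =>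
    p.sub_mem (hp x hx) (p.smul_mem c hx)
  have hf_apply (u : p) : (f u : n → F) = H *ᵥ u - c • u := rfl
  have hf_inj : Function.Injective f := by
    refine (injective_iff_map_eq_zero f).mpr fun u hu => Subtype.ext ?_
    by_contra hu0
    exact hno u u.2 hu0 (sub_eq_zero.mp (by rw [← hf_apply, hu, Submodule.coe_zero]))
  obtain ⟨u, hu⟩ := LinearMap.injective_iff_surjective.mp hf_inj ⟨g, hg⟩
  apply hwg
  calc w ⬝ᵥ g = w ⬝ᵥ (H *ᵥ u - c • u) := by rw [← hf_apply, hu]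
    _ = 0 := by
      rw [dotProduct_sub, hH.dotProduct_mulVec_comm, hw, dotProduct_smul, smul_dotProduct,
        sub_self]

end Matrix

open scoped ComplexOrder in
theorem Matrix.IsHermitian.posDef_of_forall_eigenvector {𝕜 n : Type*} [RCLike 𝕜] [Fintype n]
    {A : Matrix n n 𝕜} (hA : A.IsHermitian)
    (h : ∀ (t : ℝ) (v : n → 𝕜), v ≠ 0 → A *ᵥ v = t • v → 0 < t) : A.PosDef := by
  classical
  exact hA.posDef_iff_eigenvalues_pos.mpr fun i =>
    h _ _ ((WithLp.ofLp_eq_zero 2).ne.mpr (hA.eigenvectorBasis.orthonormal.ne_zero i))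
      (hA.mulVec_eigenvectorBasis i)

section KrylovFull

variable {d : ℕ} (H : Matrix (Fin d) (Fin d) ℝ) (g : Fin d → ℝ)

theorem self_mem_krylovFull : g ∈ KrylovFull H g :=
  Submodule.subset_span ⟨0, by simp⟩

theorem mulVec_mem_krylovFull {x : Fin d → ℝ} (hx : x ∈ KrylovFull H g) :
    H *ᵥ x ∈ KrylovFull H g := by
  induction hx using Submodule.span_induction with
  | mem _ hy =>
    obtain ⟨i, rfl⟩ := hy
    exact Submodule.subset_span ⟨i + 1, by dsimp only; rw [pow_succ', mulVec_mulVec]⟩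
  | zero => simp
  | add _ _ _ _ hx hy => rw [mulVec_add]; exact add_mem hx hy
  | smul a _ _ hx => rw [mulVec_smul]; exact Submodule.smul_mem _ a hx

end KrylovFull

theorem posDef_iff_krylov_pos_general {d : ℕ} (H : Matrix (Fin d) (Fin d) ℝ)
    (hH : H.IsSymm) (g : Fin d → ℝ)
    (hrel : ∀ lam : ℝ, (∃ v : Fin d → ℝ, v ≠ 0 ∧ H *ᵥ v = lam • v) → gRelevant H g lam) :
    H.PosDef ↔ ∀ z ∈ KrylovFull H g, z ≠ 0 → 0 < z ⬝ᵥ (H *ᵥ z) := by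
  refine ⟨fun hpd z _ hz => by simpa using hpd.dotProduct_mulVec_pos hz, fun hpos => ?_⟩
  refine (isHermitian_iff_isSymm.mpr hH).posDef_of_forall_eigenvector fun c v hv hcv => ?_
  obtain ⟨w, hw, hwg⟩ := hrel c ⟨v, hv, hcv⟩
  obtain ⟨z, hzK, hz, hcz⟩ := hH.exists_eigenvector_mem_of_dotProduct_ne_zero
    (fun x => mulVec_mem_krylovFull H g) (self_mem_krylovFull H g) hw hwg
  have hquad := hpos z hzK hz
  rw [hcz, dotProduct_smul, smul_eq_mul] at hquad
  exact pos_of_mul_pos_left hquad (Fintype.sum_nonneg fun i => mul_self_nonneg (z i))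

/-- If every eigenvalue of `H` is `g`-relevant, then `H` is positive definite iff the
curvature is strictly positive on every nonzero element of the full Krylov space. -/
theorem posDef_iff_krylov_pos {d : ℕ} (H : Matrix (Fin d) (Fin d) ℝ)
    (hH : H.IsSymm) (g : Fin d → ℝ) (hg : g ≠ 0)
    (hrel : ∀ lam : ℝ, (∃ v : Fin d → ℝ, v ≠ 0 ∧ H *ᵥ v = lam • v) → gRelevant H g lam) :
    H.PosDef ↔ ∀ z ∈ KrylovFull H g, z ≠ 0 → 0 < z ⬝ᵥ (H *ᵥ z) :=
  posDef_iff_krylov_pos_general H hH g hrel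
end

section
/- Let f : ℝ^d → ℝ be twice continuously differentiable with L_H-Lipschitz continuous Hessian, let x ∈ ℝ^d, and let K be a linear subspace of ℝ^d on which the Hessian at x is uniformly positive, i.e., ⟨z, ∇²f(x) z⟩ ≥ σ‖z‖² for all z ∈ K, for some σ > 0. Then for every d ∈ K with ‖d‖ ≤ 2σ/L_H, one has f(x + d) ≥ f(x) + ⟨∇f(x), d⟩. -/
open scoped RealInnerProductSpace

/-- The Hessian of `f : ℝ^d → ℝ` at `x`, as the derivative of the gradient. -/
noncomputable def hessian {d : ℕ} (f : EuclideanSpace ℝ (Fin d) → ℝ)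
    (x : EuclideanSpace ℝ (Fin d)) :
    EuclideanSpace ℝ (Fin d) →L[ℝ] EuclideanSpace ℝ (Fin d) :=
  fderiv ℝ (gradient f) x

/-!
Restrict `f` to the segment, `φ t = f (x + t • v)`. Then `φ'' t = ⟪∇²f(x + t • v) v, v⟫`, and
the Lipschitz bound on the Hessian gives `φ'' t ≥ a - b t` on `[0, 1]` with `a = σ ‖v‖²` and
`b = L_H ‖v‖³`. Subtracting the cubic with second derivative `a - b t` leaves a convex function,
which lies above its tangent at `0`; hence `φ 1 ≥ φ 0 + φ' 0 + a / 2 - b / 6`, and the radius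
`‖v‖ ≤ 2σ / L_H` makes `b ≤ 2a`, so the remainder `a / 2 - b / 6` is nonnegative.
-/

open Set

theorem ConvexOn.add_deriv_mul_le {g : ℝ → ℝ} {g' a b : ℝ} (hab : a ≤ b)
    (hg : ConvexOn ℝ (Icc a b) g) (hg' : HasDerivAt g g' a) :
    g a + g' * (b - a) ≤ g b := by
  rcases hab.eq_or_lt with rfl | hlt
  · simp
  have hslope := hg.le_slope_of_hasDerivAt (left_mem_Icc.2 hab) (right_mem_Icc.2 hab) hlt hg'
  rw [slope_def_field, le_div_iff₀ (sub_pos.2 hlt)] at hslope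
  linarith

theorem add_deriv_mul_le_of_deriv2_nonneg {g g' g'' : ℝ → ℝ} {a b : ℝ} (hab : a ≤ b)
    (hg : ∀ t, HasDerivAt g (g' t) t) (hg' : ∀ t, HasDerivAt g' (g'' t) t)
    (hg'' : ∀ t ∈ Icc a b, 0 ≤ g'' t) :
    g a + g' a * (b - a) ≤ g b :=
  ConvexOn.add_deriv_mul_le hab
    (convexOn_of_hasDerivWithinAt2_nonneg (convex_Icc a b)
      (HasDerivAt.continuousOn fun t _ => hg t) (fun t _ => (hg t).hasDerivWithinAt)
      (fun t _ => (hg' t).hasDerivWithinAt) fun t ht => hg'' t (interior_subset ht))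
    (hg a)

theorem add_deriv_add_le_of_affine_le_deriv2 {φ φ' φ'' : ℝ → ℝ} {a b : ℝ}
    (hφ : ∀ t, HasDerivAt φ (φ' t) t) (hφ' : ∀ t, HasDerivAt φ' (φ'' t) t)
    (hφ'' : ∀ t ∈ Icc (0 : ℝ) 1, a - b * t ≤ φ'' t) :
    φ 0 + φ' 0 + (a / 2 - b / 6) ≤ φ 1 := by
  have hcubic : ∀ t : ℝ,
      HasDerivAt (fun s => a * s ^ 2 / 2 - b * s ^ 3 / 6) (a * t - b * t ^ 2 / 2) t :=
    fun t => ((((hasDerivAt_pow 2 t).const_mul a).div_const 2).sub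
      (((hasDerivAt_pow 3 t).const_mul b).div_const 6)).congr_deriv (by push_cast; ring)
  have hquadratic : ∀ t : ℝ, HasDerivAt (fun s => a * s - b * s ^ 2 / 2) (a - b * t) t :=
    fun t => (((hasDerivAt_id t).const_mul a).sub
      (((hasDerivAt_pow 2 t).const_mul b).div_const 2)).congr_deriv (by push_cast; ring)
  have htangent := add_deriv_mul_le_of_deriv2_nonneg zero_le_one
    (fun t => (hφ t).sub (hcubic t)) (fun t => (hφ' t).sub (hquadratic t))
    fun t ht => sub_nonneg.2 (hφ'' t ht)
  norm_num at htangent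
  linarith

section InnerProductSpace

variable {E : Type*} [NormedAddCommGroup E] [InnerProductSpace ℝ E]

theorem inner_apply_self_sub_le_norm_sub_mul_sq (A B : E →L[ℝ] E) (v : E) :
    ⟪A v, v⟫ - ⟪B v, v⟫ ≤ ‖A - B‖ * ‖v‖ ^ 2 :=
  calc ⟪A v, v⟫ - ⟪B v, v⟫ = ⟪(A - B) v, v⟫ := by simp [inner_sub_left]
    _ ≤ ‖(A - B) v‖ * ‖v‖ := real_inner_le_norm _ _
    _ ≤ ‖A - B‖ * ‖v‖ * ‖v‖ := by gcongr; exact (A - B).le_opNorm v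
    _ = ‖A - B‖ * ‖v‖ ^ 2 := by ring

theorem hasDerivAt_add_smul (x v : E) (t : ℝ) : HasDerivAt (fun s : ℝ => x + s • v) v t := by
  simpa using ((hasDerivAt_id t).smul_const v).const_add x

variable [CompleteSpace E] {f : E → ℝ}

theorem ContDiff.differentiable_gradient (hf : ContDiff ℝ 2 f) :
    Differentiable ℝ (gradient f) :=
  (InnerProductSpace.toDual ℝ E).symm.differentiable.comp
    ((hf.fderiv_right (m := 1) (by norm_num)).differentiable one_ne_zero)

theorem hasDerivAt_comp_add_smul {x v : E} {t : ℝ} (hf : DifferentiableAt ℝ f (x + t • v)) :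
    HasDerivAt (fun s : ℝ => f (x + s • v)) ⟪gradient f (x + t • v), v⟫ t :=
  (hf.hasGradientAt.hasFDerivAt.comp_hasDerivAt t (hasDerivAt_add_smul x v t) :)

theorem hasDerivAt_inner_gradient_comp_add_smul {x v : E} {t : ℝ}
    (hf : DifferentiableAt ℝ (gradient f) (x + t • v)) :
    HasDerivAt (fun s : ℝ => ⟪gradient f (x + s • v), v⟫)
      ⟪fderiv ℝ (gradient f) (x + t • v) v, v⟫ t := by
  simpa using (hf.hasFDerivAt.comp_hasDerivAt t (hasDerivAt_add_smul x v t)).inner ℝ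
    (hasDerivAt_const t v)

end InnerProductSpace

/-- Local convexity: if the Hessian at `x` is uniformly positive on a subspace `K`, then
`f` lies above its linearization at `x` within a small ball of `K`. -/
theorem local_convexity_on_subspace {d : ℕ} (f : EuclideanSpace ℝ (Fin d) → ℝ)
    (LH σ : ℝ) (hLH : 0 < LH) (hσ : 0 < σ)
    (hf : ContDiff ℝ 2 f)
    (hLip : ∀ x y : EuclideanSpace ℝ (Fin d), ‖hessian f x - hessian f y‖ ≤ LH * ‖x - y‖)
    (x : EuclideanSpace ℝ (Fin d)) (K : Submodule ℝ (EuclideanSpace ℝ (Fin d)))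
    (hK : ∀ z ∈ K, σ * ‖z‖ ^ 2 ≤ ⟪z, hessian f x z⟫) :
    ∀ v ∈ K, ‖v‖ ≤ 2 * σ / LH → f x + ⟪gradient f x, v⟫ ≤ f (x + v) := by
  intro v hvK hv
  have hLv : LH * ‖v‖ ≤ 2 * σ := by rwa [le_div_iff₀' hLH] at hv
  have hcurvature : ∀ t ∈ Icc (0 : ℝ) 1,
      σ * ‖v‖ ^ 2 - LH * ‖v‖ ^ 3 * t ≤ ⟪hessian f (x + t • v) v, v⟫ := by
    intro t ht
    have hdist : ‖hessian f x - hessian f (x + t • v)‖ ≤ LH * ‖v‖ * t := by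
      simpa [norm_smul, abs_of_nonneg ht.1, mul_comm, mul_left_comm] using hLip x (x + t • v)
    have hdiff := inner_apply_self_sub_le_norm_sub_mul_sq (hessian f x) (hessian f (x + t • v)) v
    rw [real_inner_comm] at hdiff
    have hdist_sq := mul_le_mul_of_nonneg_right hdist (sq_nonneg ‖v‖)
    linarith [hK v hvK]
  have htaylor := add_deriv_add_le_of_affine_le_deriv2
    (fun t => hasDerivAt_comp_add_smul (hf.differentiable two_ne_zero _))
    (fun t => hasDerivAt_inner_gradient_comp_add_smul (hf.differentiable_gradient _)) hcurvature
  simp only [zero_smul, add_zero, one_smul] at htaylor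
  have hcubic : LH * ‖v‖ ^ 3 ≤ 2 * σ * ‖v‖ ^ 2 :=
    calc LH * ‖v‖ ^ 3 = LH * ‖v‖ * ‖v‖ ^ 2 := by ring
      _ ≤ 2 * σ * ‖v‖ ^ 2 := by gcongr
  have hquadratic : 0 ≤ σ * ‖v‖ ^ 2 := by positivity
  linarith
end

section
/- Let f : ℝ^d → ℝ be twice continuously differentiable and bounded below by f*, let 0 < ε_g ≤ 1, 0 < ε_H ≤ 1, and c₁, c₂ > 0. Let (x_k)_{k≥0} be a sequence in ℝ^d such that for every k: (i) f(x_{k+1}) ≤ f(x_k); (ii) if ‖∇f(x_k)‖ > ε_g and ‖∇f(x_{k+1})‖ > ε_g, then f(x_k) − f(x_{k+1}) ≥ c₁·ε_g^{3/2}; and (iii) if ‖∇f(x_k)‖ ≤ ε_g and λ_min(∇²f(x_k)) < −ε_H, then f(x_k) − f(x_{k+1}) ≥ c₂·ε_H³. Then there exists an index k with k ≤ (f(x₀) − f*)/(c₁·ε_g^{3/2}) + 2(f(x₀) − f*)/(c₂·ε_H³) + 1 such that ‖∇f(x_k)‖ ≤ ε_g and λ_min(∇²f(x_k)) ≥ −ε_H,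 i.e., ⟨z, ∇²f(x_k) z⟩ ≥ −ε_H‖z‖² for all z ∈ ℝ^d. -/
open scoped RealInnerProductSpace

set_option maxHeartbeats 1000000 in
/-- Iteration complexity for second-order optimality: within the stated number of
iterations there is an iterate with small gradient and almost positive semidefinite
Hessian. -/
theorem second_order_iteration_complexity {d : ℕ} (f : EuclideanSpace ℝ (Fin d) → ℝ)
    (hf : ContDiff ℝ 2 f)
    (fstar : ℝ) (hbelow : ∀ y : EuclideanSpace ℝ (Fin d), fstar ≤ f y)
    (εg εH c₁ c₂ : ℝ) (hεg0 : 0 < εg) (hεg1 : εg ≤ 1) (hεH0 : 0 < εH) (hεH1 : εH ≤ 1)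
    (hc₁ : 0 < c₁) (hc₂ : 0 < c₂)
    (x : ℕ → EuclideanSpace ℝ (Fin d))
    (hmono : ∀ k : ℕ, f (x (k + 1)) ≤ f (x k))
    (hdec₁ : ∀ k : ℕ, εg < ‖gradient f (x k)‖ → εg < ‖gradient f (x (k + 1))‖ →
      c₁ * εg ^ ((3 : ℝ) / 2) ≤ f (x k) - f (x (k + 1)))
    (hdec₂ : ∀ k : ℕ, ‖gradient f (x k)‖ ≤ εg →
      (∃ z : EuclideanSpace ℝ (Fin d), ⟪z, hessian f (x k) z⟫ < -εH * ‖z‖ ^ 2) →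
      c₂ * εH ^ 3 ≤ f (x k) - f (x (k + 1))) :
    ∃ k : ℕ, (k : ℝ) ≤ (f (x 0) - fstar) / (c₁ * εg ^ ((3 : ℝ) / 2)) +
        2 * (f (x 0) - fstar) / (c₂ * εH ^ 3) + 1 ∧
      ‖gradient f (x k)‖ ≤ εg ∧
      ∀ z : EuclideanSpace ℝ (Fin d), -εH * ‖z‖ ^ 2 ≤ ⟪z, hessian f (x k) z⟫ := by
  by_contra hcon
  push_neg at hcon
  set a := c₁ * εg ^ ((3 : ℝ) / 2) with ha_def
  set b := c₂ * εH ^ 3 with hb_def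
  have ha : 0 < a := by
    have h1 : (0:ℝ) < εg ^ ((3:ℝ)/2) := Real.rpow_pos_of_pos hεg0 _
    positivity
  have hb : 0 < b := by positivity
  set gap := f (x 0) - fstar with hgap_def
  have hgap : 0 ≤ gap := by have := hbelow (x 0); rw [hgap_def]; linarith
  set bound := gap / a + 2 * gap / b + 1 with hbound_def
  have hbound0 : 0 ≤ bound := by
    rw [hbound_def]; positivity
  -- indicator of "small gradient" at iterate n
  set E : ℕ → ℝ := fun n => if ‖gradient f (x n)‖ ≤ εg then 1 else 0 with hE_def
  have hE0 : ∀ n, 0 ≤ E n := by intro n; rw [hE_def]; dsimp only; split <;> norm_num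
  have hE1 : ∀ n, E n ≤ 1 := by intro n; rw [hE_def]; dsimp only; split <;> norm_num
  have key : ∀ n : ℕ, (∀ k : ℕ, k < n → (k : ℝ) ≤ bound) →
      (n : ℝ) * (a * b) ≤ (f (x 0) - f (x n)) * b + 2 * (f (x 0) - f (x n)) * a
        + E n * (a * b) := by
    intro n
    induction n with
    | zero =>
        intro _
        have := hE0 0
        have hab : 0 < a * b := mul_pos ha hb
        simp only [Nat.cast_zero, sub_self]
        nlinarith
    | succ n ih =>
        intro hbd
        have ihn := ih (fun k hk => hbd k (Nat.lt_succ_of_lt hk))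
        have hmn : f (x (n+1)) ≤ f (x n) := hmono n
        have hEn1 := hE0 (n+1)
        have hEn1' := hE1 (n+1)
        push_cast
        by_cases hs : ‖gradient f (x n)‖ ≤ εg
        · have hz := hcon n (hbd n (Nat.lt_succ_self n)) hs
          have hδ : b ≤ f (x n) - f (x (n+1)) := hdec₂ n hs hz
          have hEn : E n = 1 := by rw [hE_def]; exact if_pos hs
          rw [hEn] at ihn
          have h1 : b * b ≤ (f (x n) - f (x (n+1))) * b :=
            mul_le_mul_of_nonneg_right hδ hb.le
          have h2 : b * a ≤ (f (x n) - f (x (n+1))) * a :=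
            mul_le_mul_of_nonneg_right hδ ha.le
          have h3 : 0 ≤ E (n+1) * (a * b) := mul_nonneg hEn1 (mul_pos ha hb).le
          have h4 : 0 ≤ b * b := mul_nonneg hb.le hb.le
          nlinarith [h1, h2, h3, h4]
        · have hEn : E n = 0 := by rw [hE_def]; exact if_neg hs
          rw [hEn] at ihn
          by_cases hs' : ‖gradient f (x (n+1))‖ ≤ εg
          · have hEn' : E (n+1) = 1 := by rw [hE_def]; exact if_pos hs'
            rw [hEn']
            have h1 : f (x (n+1)) * b ≤ f (x n) * b :=
              mul_le_mul_of_nonneg_right hmn hb.le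
            have h2 : f (x (n+1)) * a ≤ f (x n) * a :=
              mul_le_mul_of_nonneg_right hmn ha.le
            nlinarith [h1, h2]
          · have hδ : a ≤ f (x n) - f (x (n+1)) :=
              hdec₁ n (lt_of_not_ge hs) (lt_of_not_ge hs')
            have hEn' : E (n+1) = 0 := by rw [hE_def]; exact if_neg hs'
            rw [hEn']
            have h1 : a * b ≤ (f (x n) - f (x (n+1))) * b :=
              mul_le_mul_of_nonneg_right hδ hb.le
            have h2 : f (x (n+1)) * a ≤ f (x n) * a :=
              mul_le_mul_of_nonneg_right hmn ha.le
            nlinarith [h1, h2]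
  set N := ⌊bound⌋₊ + 1 with hN_def
  have hkey := key N (fun k hk => by
    have hk' : k ≤ ⌊bound⌋₊ := Nat.lt_succ_iff.mp (by rw [hN_def] at hk; exact hk)
    calc (k : ℝ) ≤ (⌊bound⌋₊ : ℝ) := by exact_mod_cast hk'
      _ ≤ bound := Nat.floor_le hbound0)
  have hDle : f (x 0) - f (x N) ≤ gap := by
    have := hbelow (x N); rw [hgap_def]; linarith
  have hNgt : bound < (N : ℝ) := by
    have := Nat.lt_floor_add_one bound
    rw [hN_def]; push_cast; linarith
  have hboundmul : bound * (a * b) = gap * b + 2 * gap * a + a * b := by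
    rw [hbound_def]
    field_simp
  have hab : 0 < a * b := mul_pos ha hb
  have h1 : (f (x 0) - f (x N)) * b ≤ gap * b := mul_le_mul_of_nonneg_right hDle hb.le
  have h2 : (f (x 0) - f (x N)) * a ≤ gap * a := mul_le_mul_of_nonneg_right hDle ha.le
  have h3 : E N * (a * b) ≤ 1 * (a * b) := mul_le_mul_of_nonneg_right (hE1 N) hab.le
  have h4 : bound * (a * b) < (N : ℝ) * (a * b) := mul_lt_mul_of_pos_right hNgt hab
  nlinarith [h1, h2, h3, h4, hkey, hboundmul]
end
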